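/- Let G be a graph, let q ∈ ℕ, let (a,b) be a q-slim pair of vertices in G, and let (T, χ) be a tree decomposition of G. Then there exists I ⊆ V(T) with |I| < q such that for every a–b-path P in G, the set ⋃_{t ∈ I} χ(t) intersects the interior P* of P. -/

import Mathlib

open SimpleGraph

/-- `H` is an induced minor of `G`: there are pairwise disjoint nonempty connected
induced subgraphs `X w` of `G`, one for each vertex `w` of `H`, such that distinct
branch sets are anticomplete iff the corresponding vertices are non-adjacent in `H`. -/
def IsInducedMinor {V W : Type*} (G : SimpleGraph V) (H : SimpleGraph W) : Prop :=
  ∃ X : W → Set V,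
    (∀ w, (X w).Nonempty) ∧
    (∀ w, (G.induce (X w)).Connected) ∧
    (∀ w₁ w₂, w₁ ≠ w₂ → Disjoint (X w₁) (X w₂)) ∧
    (∀ w₁ w₂, w₁ ≠ w₂ →
      ((∀ a ∈ X w₁, ∀ b ∈ X w₂, ¬ G.Adj a b) ↔ ¬ H.Adj w₁ w₂))

/-- The `t`-by-`t` hexagonal grid (wall), in the brick-wall representation. -/
def hexGrid (t : ℕ) : SimpleGraph (Fin t × Fin (2 * t)) :=
  SimpleGraph.fromRel (fun a b =>
    (a.1 = b.1 ∧ a.2.val + 1 = b.2.val) ∨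
    (a.2 = b.2 ∧ a.1.val + 1 = b.1.val ∧ (a.1.val + a.2.val) % 2 = 0))

/-- Membership in the class `𝒞_t` of `{K_{t,t}, W_{t×t}}`-induced-minor-free graphs. -/
def MemCt (t : ℕ) {V : Type*} (G : SimpleGraph V) : Prop :=
  ¬ IsInducedMinor G (completeBipartiteGraph (Fin t) (Fin t)) ∧
  ¬ IsInducedMinor G (hexGrid t)

/-- Membership in `𝒞_t^*`: member of `𝒞_t` with no clique of size `t`. -/
def MemCtStar (t : ℕ) {V : Type*} (G : SimpleGraph V) : Prop :=
  MemCt t G ∧ G.CliqueFree t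

/-- A tree decomposition of `G` with tree `τ` and bags `χ`. -/
def IsTreeDecomp {V T : Type*} (G : SimpleGraph V) (τ : SimpleGraph T)
    (χ : T → Finset V) : Prop :=
  τ.IsTree ∧
  (∀ v : V, ∃ i, v ∈ χ i) ∧
  (∀ u v : V, G.Adj u v → ∃ i, u ∈ χ i ∧ v ∈ χ i) ∧
  (∀ v : V, (τ.induce {i | v ∈ χ i}).Connected)

/-- The treewidth of a finite graph: the least `k` such that `G` admits a tree
decomposition with all bags of size at most `k + 1`. -/
noncomputable def treewidth {V : Type*} [Fintype V] (G : SimpleGraph V) : ℕ :=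
  sInf { k | ∃ (n : ℕ) (τ : SimpleGraph (Fin n)) (χ : Fin n → Finset V),
    IsTreeDecomp G τ χ ∧ ∀ i, (χ i).card ≤ k + 1 }

/-- A walk that is an induced (chordless) path. -/
def IsInducedPathW {V : Type*} (G : SimpleGraph V) {u v : V} (P : G.Walk u v) : Prop :=
  P.IsPath ∧ ∀ a ∈ P.support, ∀ b ∈ P.support, G.Adj a b → s(a, b) ∈ P.edges

/-- The interior of a path: its support minus its two ends. -/
def interiorW {V : Type*} {G : SimpleGraph V} {u v : V} (P : G.Walk u v) : Set V :=
  {x | x ∈ P.support ∧ x ≠ u ∧ x ≠ v}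

/-- `S` separates `a` from `b` in `G`: every walk from `a` to `b` meets `S`. -/
def Separates {V : Type*} (G : SimpleGraph V) (S : Set V) (a b : V) : Prop :=
  ∀ P : G.Walk a b, ∃ x ∈ S, x ∈ P.support

/-- `conn_G(a,b)`: the minimum size of an `a`–`b`-separator. -/
noncomputable def connNum {V : Type*} [Fintype V] (G : SimpleGraph V) (a b : V) : ℕ :=
  sInf { k | ∃ S : Set V, a ∉ S ∧ b ∉ S ∧ Separates G S a b ∧ S.ncard = k }

/-- `A` and `B` are anticomplete: disjoint, with no edges between them. -/
def Anticomplete {V : Type*} (G : SimpleGraph V) (A B : Set V) : Prop :=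
  Disjoint A B ∧ ∀ a ∈ A, ∀ b ∈ B, ¬ G.Adj a b

/-- The graph `G \ M`: delete the vertices of `M` (they become isolated). -/
def delVerts {V : Type*} (G : SimpleGraph V) (M : Set V) : SimpleGraph V where
  Adj a b := G.Adj a b ∧ a ∉ M ∧ b ∉ M
  symm := ⟨fun _ _ h => ⟨h.1.symm, h.2.2, h.2.1⟩⟩
  loopless := ⟨fun a h => G.loopless.irrefl a h.1⟩

/-- The set of connected components of `C` in `G`: maximal connected subsets of `C`. -/
def ccSet {V : Type*} (G : SimpleGraph V) (C : Set V) : Set (Set V) :=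
  { D | D ⊆ C ∧ D.Nonempty ∧ (G.induce D).Connected ∧
      ∀ D' : Set V, D ⊆ D' → D' ⊆ C → (G.induce D').Connected → D' = D }

/-- `(a,b)` is `s`-wide: there are `s` pairwise internally anticomplete `a`–`b`-paths. -/
def Wide {V : Type*} (G : SimpleGraph V) (s : ℕ) (a b : V) : Prop :=
  ∃ P : Fin s → G.Walk a b,
    (∀ i, IsInducedPathW G (P i)) ∧
    (∀ i j, i ≠ j → ∀ x ∈ interiorW (P i), ∀ y ∈ interiorW (P j), x ≠ y ∧ ¬ G.Adj x y)

/-- `(a,b)` is an `s`-slim pair: non-adjacent and not `s`-wide. -/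
def SlimPair {V : Type*} (G : SimpleGraph V) (s : ℕ) (a b : V) : Prop :=
  a ≠ b ∧ ¬ G.Adj a b ∧ ¬ Wide G s a b

/-- `G` is `(t,s)`-slim: every stable set of size `t` contains an `s`-slim pair. -/
def TSSlim {V : Type*} (G : SimpleGraph V) (t s : ℕ) : Prop :=
  ∀ S : Finset V, S.card = t → (∀ a ∈ S, ∀ b ∈ S, a ≠ b → ¬ G.Adj a b) →
    ∃ a ∈ S, ∃ b ∈ S, a ≠ b ∧ SlimPair G s a b

/-- `(X,Y,Z,C)` is a `(t,p)`-barrier in `G`. -/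
def IsTPBarrier {V : Type*} (G : SimpleGraph V) (t p : ℕ) (X Y Z C : Set V) : Prop :=
  List.Pairwise Disjoint [X, Y, Z, C] ∧
  (∀ x ∈ X, ∀ z ∈ Z, ∀ P : G.Walk x z, IsInducedPathW G P →
    (∀ w ∈ P.support, w ∉ C) →
    ∃ x' ∈ X, ∃ z' ∈ Z, ∃ Q : G.Walk x' z',
      IsInducedPathW G Q ∧ (∀ w ∈ Q.support, w ∉ C) ∧
      (∀ w ∈ Q.support, w ∈ P.support) ∧ (∀ w ∈ interiorW Q, w ∈ Y)) ∧
  (∀ x ∈ X, ∀ z ∈ Z, ∀ P : G.Walk x z, IsInducedPathW G P →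
    (∀ w ∈ P.support, w ∉ C) →
    t ≤ Set.ncard { D ∈ ccSet G C | ∃ c ∈ D, ∃ w ∈ P.support, G.Adj c w }) ∧
  (∀ D ∈ ccSet G C, D.ncard ≤ p)

/-- The barrier `(X,Y,Z,C)` separates `u` from `v` in `G`. -/
def BarSeparates {V : Type*} (G : SimpleGraph V) (X Y Z C : Set V) (u v : V) : Prop :=
  u ∉ X ∪ Y ∪ Z ∪ C ∧ v ∉ X ∪ Y ∪ Z ∪ C ∧
  Separates G (X ∪ C) u v ∧ Separates G (Z ∪ C) u v

/-- A barrier is reduced: every component of `X ∪ Y ∪ Z` meets both `X` and `Z`. -/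
def ReducedBarrier {V : Type*} (G : SimpleGraph V) (X Y Z : Set V) : Prop :=
  ∀ D ∈ ccSet G (X ∪ Y ∪ Z), (D ∩ X).Nonempty ∧ (D ∩ Z).Nonempty

/-- `G` is `(s,t,p,c,f,g)`-slim-barred. -/
def SlimBarred {V : Type*} [Fintype V] (G : SimpleGraph V) (s t p : ℕ)
    (c f g : ℕ → ℕ) : Prop :=
  ∀ u v : V, SlimPair G s u v →
    ∃ X Y Z C M : Set V,
      List.Pairwise Disjoint [X, Y, Z, C, M] ∧
      (∀ w ∈ X ∪ Y ∪ Z ∪ C ∪ M, w ≠ u ∧ w ≠ v) ∧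
      IsTPBarrier (delVerts G M) t p X Y Z C ∧
      BarSeparates (delVerts G M) X Y Z C u v ∧
      Set.ncard (ccSet (delVerts G M) C) ≤ c (Fintype.card V) ∧
      M.ncard ≤ f (Fintype.card V) ∧
      (X ∪ Y ∪ Z).ncard ≤ g (Fintype.card V)

/-- `(a,b)` is `(x,y,z,p)`-mineable in `G`. -/
def Mineable {V : Type*} (G : SimpleGraph V) (a b : V) (x y z p : ℕ) : Prop :=
  ∃ Ys Xs : Fin x → Set V,
    (∀ i, a ∉ Ys i ∧ b ∉ Ys i) ∧
    (∀ i j, i ≠ j → Anticomplete G (Ys i) (Ys j)) ∧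
    (∀ i, (Xs i).Nonempty ∧ a ∉ Xs i ∧ b ∉ Xs i ∧
      Xs i ⊆ {w | w ∉ Ys i ∧ ∃ y' ∈ Ys i, G.Adj y' w}) ∧
    (∀ i, Separates (delVerts G {v | ∃ j, j < i ∧ v ∈ Ys j}) (Ys i ∪ Xs i) a b) ∧
    (delVerts G {v | ∃ j, v ∈ Ys j}).Reachable a b ∧
    (∀ i, Set.ncard (ccSet G (Ys i)) ≤ y) ∧
    (∀ i, ∀ D ∈ ccSet G (Ys i), D.ncard ≤ p) ∧
    (∀ w : V, Set.ncard {i : Fin x | w ∈ Ys i ∪ Xs i} ≤ z)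

/-- Two vertices are twins: same neighbourhoods away from each other. -/
def Twins {V : Type*} (G : SimpleGraph V) (u v : V) : Prop :=
  G.neighborSet u \ {v} = G.neighborSet v \ {u}

/-- A star structure on `G`: an induced star forest with vertex set `C ∪ L`, each
component a star with at least two vertices, with centers `C`, leaves `L`, and each
leaf `l` attached to the center `ctr l`. -/
structure StarStructure {V : Type*} (G : SimpleGraph V) (C L : Set V)
    (ctr : V → V) : Prop where
  disj : Disjoint C L
  ctrMem : ∀ l ∈ L, ctr l ∈ C ∧ G.Adj (ctr l) l
  hasLeaf : ∀ c ∈ C, ∃ l ∈ L, ctr l = c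
  inducedStar : ∀ a ∈ C ∪ L, ∀ b ∈ C ∪ L, G.Adj a b →
    (a ∈ C ∧ b ∈ L ∧ ctr b = a) ∨ (b ∈ C ∧ a ∈ L ∧ ctr a = b)

/-- Centers of the projection `F(G')` of the star forest onto the induced subgraph
of `G` with vertex set `W`. -/
def projCenters {V : Type*} (C L : Set V) (ctr : V → V) (W : Set V) : Set V :=
  {c | c ∈ C ∧ c ∈ W ∧ ∃ l, l ∈ L ∧ l ∈ W ∧ ctr l = c}

/-- The star of `F(G')` with center `c`. -/
def projStar {V : Type*} (L : Set V) (ctr : V → V) (W : Set V) (c : V) : Set V :=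
  insert c {l | l ∈ L ∧ l ∈ W ∧ ctr l = c}

/-- The vertex set of `F(G')`. -/
def projVerts {V : Type*} (C L : Set V) (ctr : V → V) (W : Set V) : Set V :=
  ⋃ c ∈ projCenters C L ctr W, projStar L ctr W c

/-- `X` is an `F(G')`-based set. -/
def FBasedSet {V : Type*} (C L : Set V) (ctr : V → V) (W X : Set V) : Prop :=
  ∀ c ∈ projCenters C L ctr W,
    (projStar L ctr W c ∩ X).Nonempty → projStar L ctr W c ⊆ X

/-- The `F(G')`-measure of a set `X`: the number of stars of `F(G')` meeting `X` plus
the number of vertices of `X` outside `F(G')`. -/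
noncomputable def FMeasure {V : Type*} (C L : Set V) (ctr : V → V) (W X : Set V) : ℕ :=
  Set.ncard {c ∈ projCenters C L ctr W | (projStar L ctr W c ∩ X).Nonempty} +
  Set.ncard (X \ projVerts C L ctr W)

/-- A tree decomposition of the induced subgraph of `G` with vertex set `W`. -/
def IsTreeDecompOn {V T : Type*} (G : SimpleGraph V) (W : Set V)
    (τ : SimpleGraph T) (χ : T → Finset V) : Prop :=
  τ.IsTree ∧
  (∀ i, (χ i : Set V) ⊆ W) ∧
  (∀ v ∈ W, ∃ i, v ∈ χ i) ∧
  (∀ u ∈ W, ∀ v ∈ W, G.Adj u v → ∃ i, u ∈ χ i ∧ v ∈ χ i) ∧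
  (∀ v : V, (τ.induce {i | v ∈ χ i}).Connected)

/-- `G` is `(F,r)`-based: every induced subgraph `G[W]` admits a tree decomposition in
which every bag is `F(G[W])`-based with `F(G[W])`-measure at most `r`. -/
def FrBased {V : Type*} [Fintype V] (G : SimpleGraph V) (C L : Set V)
    (ctr : V → V) (r : ℕ) : Prop :=
  ∀ W : Set V, ∃ (n : ℕ) (τ : SimpleGraph (Fin n)) (χ : Fin n → Finset V),
    IsTreeDecompOn G W τ χ ∧
    ∀ i, FBasedSet C L ctr W (χ i) ∧ FMeasure C L ctr W (χ i) ≤ r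

/-- Every component of `H` is a star or a single vertex. -/
def IsStarForest {W : Type*} (H : SimpleGraph W) : Prop :=
  H.IsAcyclic ∧ ∀ (u v : W) (P : H.Walk u v), P.IsPath → P.length ≤ 2

/-- `G` has a star coloring with `k` colors. -/
def HasStarColoring {V : Type*} (G : SimpleGraph V) (k : ℕ) : Prop :=
  ∃ f : V → Fin k, (∀ u v, G.Adj u v → f u ≠ f v) ∧
    ∀ i j : Fin k, IsStarForest (G.induce {v | f v = i ∨ f v = j})

/-- `G` contains an induced subgraph isomorphic to a proper subdivision of `K_s`. -/
def InducedProperSubdivisionK {V : Type*} (G : SimpleGraph V) (s : ℕ) : Prop :=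
  ∃ (v : Fin s → V) (P : ∀ i j : Fin s, G.Walk (v i) (v j)),
    Function.Injective v ∧
    (∀ i j, i ≠ j → ¬ G.Adj (v i) (v j)) ∧
    (∀ i j, i < j → IsInducedPathW G (P i j) ∧ (interiorW (P i j)).Nonempty) ∧
    (∀ i j k l, i < j → k < l → (i, j) ≠ (k, l) →
      ∀ x ∈ interiorW (P i j), ∀ y ∈ interiorW (P k l), x ≠ y ∧ ¬ G.Adj x y) ∧
    (∀ i j k, i < j → k ≠ i → k ≠ j →
      ∀ x ∈ interiorW (P i j), x ≠ v k ∧ ¬ G.Adj x (v k))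

/-- `S` is the vertex set of an induced path of `G`. -/
def IsPathSet {V : Type*} (G : SimpleGraph V) (S : Set V) : Prop :=
  ∃ (u v : V) (P : G.Walk u v), IsInducedPathW G P ∧ S = {x | x ∈ P.support}

/-- A linear induced `H`-model in `G`: an induced `H`-model all of whose branch sets
are paths. -/
def LinearInducedModel {V W : Type*} (G : SimpleGraph V) (H : SimpleGraph W) : Prop :=
  ∃ X : W → Set V,
    (∀ w, IsPathSet G (X w)) ∧
    (∀ w, (X w).Nonempty) ∧
    (∀ w₁ w₂, w₁ ≠ w₂ → Disjoint (X w₁) (X w₂)) ∧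
    (∀ w₁ w₂, w₁ ≠ w₂ →
      ((∀ a ∈ X w₁, ∀ b ∈ X w₂, ¬ G.Adj a b) ↔ ¬ H.Adj w₁ w₂))

/-
For every induced `a`–`b`-path `P`, the set of nodes whose bags meet the interior `P*` is a
subtree of `T`, since `P*` is connected. Since every vertex and every edge of `G` lies in a
bag, disjoint subtrees come from anticomplete interiors, so slimness leaves no `q` pairwise
disjoint subtrees in this family. Subtrees of a tree have the packing–covering duality of
Gyárfás and Lehel: root the tree and take the member whose top vertex `t` is deepest. Every
member meeting it contains `t`, and the members avoiding `t` contain no `q - 1` pairwise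
disjoint ones, so by induction fewer than `q - 1` nodes hit them.
-/

open Function

namespace SimpleGraph

variable {T : Type*} {τ : SimpleGraph T}

theorem exists_walk_support_subset_of_preconnected_induce {A : Set T}
    (hA : (τ.induce A).Preconnected) {x y : T} (hx : x ∈ A) (hy : y ∈ A) :
    ∃ w : τ.Walk x y, ∀ z ∈ w.support, z ∈ A := by
  obtain ⟨p⟩ := hA ⟨x, hx⟩ ⟨y, hy⟩
  refine ⟨p.map (Embedding.induce A).toHom, fun z hz => ?_⟩
  replace hz : z ∈ (p.map (Embedding.induce A).toHom).support := hz
  rw [Walk.support_map, List.mem_map] at hz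
  obtain ⟨z, -, rfl⟩ := hz
  exact z.2

theorem connected_induce_biUnion {V W : Type*} {G : SimpleGraph V} {H : SimpleGraph W}
    {X : Set V} {f : V → Set W} (hX : (G.induce X).Connected)
    (hf : ∀ x ∈ X, (H.induce (f x)).Connected)
    (hadj : ∀ x ∈ X, ∀ y ∈ X, G.Adj x y → (f x ∩ f y).Nonempty) :
    (H.induce (⋃ x ∈ X, f x)).Connected := by
  set U := ⋃ x ∈ X, f x
  have hlocal : ∀ x : X, ∀ s (hs : s ∈ f x) t (ht : t ∈ f x),
      (H.induce U).Reachable ⟨s, Set.mem_biUnion x.2 hs⟩ ⟨t, Set.mem_biUnion x.2 ht⟩ :=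
    fun x s hs t ht => ((hf x x.2).preconnected ⟨s, hs⟩ ⟨t, ht⟩).map
      (induceHomOfLE H (Set.subset_biUnion_of_mem (u := f) x.2)).toHom
  have hwalk : ∀ (x y : X), (G.induce X).Walk x y → ∀ s (hs : s ∈ f x) t (ht : t ∈ f y),
      (H.induce U).Reachable ⟨s, Set.mem_biUnion x.2 hs⟩ ⟨t, Set.mem_biUnion y.2 ht⟩ := by
    intro x y p
    induction p with
    | nil => exact hlocal _
    | cons h p ih =>
      intro s hs t ht
      obtain ⟨m, hmx, hmz⟩ := hadj _ (Subtype.prop _) _ (Subtype.prop _) h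
      exact (hlocal _ s hs m hmx).trans (ih m hmz t ht)
  obtain ⟨x⟩ := hX.nonempty
  obtain ⟨s₀⟩ := (hf x x.2).nonempty
  refine Connected.mk (fun ⟨s, hs⟩ ⟨t, ht⟩ => ?_)
    (nonempty := ⟨⟨s₀, Set.mem_biUnion x.2 s₀.2⟩⟩)
  obtain ⟨y, hy, hsy⟩ := Set.mem_iUnion₂.1 hs
  obtain ⟨z, hz, htz⟩ := Set.mem_iUnion₂.1 ht
  obtain ⟨p⟩ := hX.preconnected ⟨y, hy⟩ ⟨z, hz⟩
  exact hwalk _ _ p s hsy t htz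

theorem pairwise_disjoint_fin_cons {α : Type*} {n : ℕ} {A : Set α} {f : Fin n → Set α}
    (hA : ∀ i, Disjoint A (f i)) (hf : Pairwise (Disjoint on f)) :
    Pairwise (Disjoint on (Fin.cons A f : Fin (n + 1) → Set α)) := by
  intro i j hij
  cases i using Fin.cases with
  | zero => cases j using Fin.cases with
    | zero => exact absurd rfl hij
    | succ j => exact hA j
  | succ i => cases j using Fin.cases with
    | zero => exact (hA i).symm
    | succ j => exact hf (Fin.succ_injective n |>.ne_iff.1 hij)

namespace IsTree

noncomputable def path (hτ : τ.IsTree) (u v : T) : τ.Walk u v :=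
  (hτ.existsUnique_path u v).exists.choose

section path

variable (hτ : τ.IsTree)

theorem isPath_path (u v : T) : (hτ.path u v).IsPath :=
  (hτ.existsUnique_path u v).exists.choose_spec

theorem eq_path_of_isPath {u v : T} {p : τ.Walk u v} (hp : p.IsPath) : p = hτ.path u v :=
  (hτ.existsUnique_path u v).unique hp (hτ.isPath_path u v)

theorem support_path_subset {u v : T} (p : τ.Walk u v) :
    (hτ.path u v).support ⊆ p.support := by
  classical
  rw [← hτ.eq_path_of_isPath p.bypass_isPath]
  exact p.support_bypass_subset_support

theorem length_path_lt_of_mem_support [DecidableEq T] {u v t : T}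
    (ht : t ∈ (hτ.path u v).support) (htv : t ≠ v) :
    (hτ.path u t).length < (hτ.path u v).length := by
  rw [← hτ.eq_path_of_isPath ((hτ.isPath_path u v).takeUntil ht)]
  exact Walk.length_takeUntil_lt_length ht htv

theorem mem_support_path_of_adj {r t y y' : T} (hadj : τ.Adj y y')
    (ht : t ∈ (hτ.path r y).support)
    (hle : (hτ.path r t).length ≤ (hτ.path r y').length) :
    t ∈ (hτ.path r y').support := by
  classical
  have hsub := hτ.support_path_subset ((hτ.path r y').concat hadj.symm) ht
  rw [Walk.support_concat, List.mem_append, List.mem_singleton] at hsub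
  rcases hsub with ht' | rfl
  · exact ht'
  by_cases hy' : y' ∈ (hτ.path r t).support
  · exact absurd hle (not_le.2 (hτ.length_path_lt_of_mem_support hy' hadj.ne.symm))
  rw [← hτ.eq_path_of_isPath ((hτ.isPath_path r t).concat hy' hadj), Walk.support_concat]
  exact List.mem_append_left _ (hτ.path r t).end_mem_support

theorem mem_support_path_of_walk {r t : T} {A : Set T}
    (hmin : ∀ z ∈ A, (hτ.path r t).length ≤ (hτ.path r z).length) {y x : T}
    (w : τ.Walk y x) (hw : ∀ z ∈ w.support, z ∈ A) (ht : t ∈ (hτ.path r y).support) :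
    t ∈ (hτ.path r x).support := by
  induction w with
  | nil => exact ht
  | cons hadj w ih =>
    refine ih (fun z hz => hw z (List.mem_cons_of_mem _ hz)) ?_
    exact hτ.mem_support_path_of_adj hadj ht
      (hmin _ (hw _ (List.mem_cons_of_mem _ w.start_mem_support)))

end path

theorem exists_mem_forall_mem_of_inter_nonempty [Finite T] (hτ : τ.IsTree) {F : Set (Set T)}
    (hF : ∀ A ∈ F, (τ.induce A).Connected) (hne : F.Nonempty) :
    ∃ A ∈ F, ∃ t ∈ A, ∀ B ∈ F, (A ∩ B).Nonempty → t ∈ B := by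
  classical
  obtain ⟨r⟩ := hτ.connected.nonempty
  let depth : T → ℕ := fun x => (hτ.path r x).length
  -- pairs `(B, u)` with `u` a top vertex of `B`; the chosen member has the deepest top
  let tops : Set (Set T × T) :=
    {p | p.1 ∈ F ∧ p.2 ∈ p.1 ∧ ∀ z ∈ p.1, depth p.2 ≤ depth z}
  have htop : ∀ B ∈ F, ∃ u, (B, u) ∈ tops := fun B hB =>
    let ⟨u, hu, hmin⟩ :=
      B.exists_min_image depth B.toFinite (Set.nonempty_coe_sort.1 (hF B hB).nonempty)
    ⟨u, hB, hu, hmin⟩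
  have htops : tops.Nonempty :=
    let ⟨A, hA⟩ := hne
    let ⟨t, ht⟩ := htop A hA
    ⟨(A, t), ht⟩
  obtain ⟨⟨A, t⟩, ⟨hA, ht, hmin⟩, hmax⟩ :=
    tops.exists_max_image (fun p => depth p.2) tops.toFinite htops
  refine ⟨A, hA, t, ht, fun B hB ⟨x, hxA, hxB⟩ => ?_⟩
  obtain ⟨u, -, hu, hminB⟩ := htop B hB
  have hut : depth u ≤ depth t := hmax (B, u) ⟨hB, hu, hminB⟩
  by_cases htu : t ∈ (hτ.path r u).support
  · obtain rfl : t = u := by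
      by_contra h
      exact absurd hut (not_le.2 (hτ.length_path_lt_of_mem_support htu h))
    exact hu
  obtain ⟨wA, hwA⟩ :=
    exists_walk_support_subset_of_preconnected_induce (hF A hA).preconnected ht hxA
  have htx : t ∈ (hτ.path r x).support :=
    hτ.mem_support_path_of_walk hmin wA hwA (hτ.path r t).end_mem_support
  obtain ⟨wB, hwB⟩ :=
    exists_walk_support_subset_of_preconnected_induce (hF B hB).preconnected hu hxB
  have htwB := hτ.support_path_subset ((hτ.path r u).append wB) htx
  rw [Walk.support_append, List.mem_append] at htwB
  exact htwB.elim (fun h => absurd h htu) (fun h => hwB t (List.mem_of_mem_tail h))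

theorem exists_finset_card_lt_forall_inter_nonempty [Finite T] (hτ : τ.IsTree) (q : ℕ)
    {F : Set (Set T)} (hF : ∀ A ∈ F, (τ.induce A).Connected)
    (hpack : ¬ ∃ f : Fin q → Set T, (∀ i, f i ∈ F) ∧ Pairwise (Disjoint on f)) :
    ∃ I : Finset T, I.card < q ∧ ∀ A ∈ F, ∃ t ∈ I, t ∈ A := by
  classical
  induction q generalizing F with
  | zero => exact absurd ⟨Fin.elim0, fun i => i.elim0, fun i => i.elim0⟩ hpack
  | succ q ih =>
    rcases F.eq_empty_or_nonempty with rfl | hne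
    · exact ⟨∅, Nat.succ_pos q, fun A hA => hA.elim⟩
    obtain ⟨A, hA, t, ht, hmeet⟩ := hτ.exists_mem_forall_mem_of_inter_nonempty hF hne
    have hpack' : ¬ ∃ f : Fin q → Set T,
        (∀ i, f i ∈ {B ∈ F | t ∉ B}) ∧ Pairwise (Disjoint on f) := by
      rintro ⟨f, hfF, hf⟩
      have hAf : ∀ i, Disjoint A (f i) := fun i => Set.disjoint_iff_inter_eq_empty.2 <|
        Set.not_nonempty_iff_eq_empty.1 fun h => (hfF i).2 (hmeet _ (hfF i).1 h)
      exact hpack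
        ⟨Fin.cons A f, Fin.cases hA fun i => (hfF i).1, pairwise_disjoint_fin_cons hAf hf⟩
    obtain ⟨I, hIq, hI⟩ := ih (fun B hB => hF B hB.1) hpack'
    refine ⟨insert t I, (Finset.card_insert_le t I).trans_lt (Nat.succ_lt_succ hIq),
      fun B hB => ?_⟩
    by_cases htB : t ∈ B
    · exact ⟨t, Finset.mem_insert_self t I, htB⟩
    · obtain ⟨i, hi, hiB⟩ := hI B ⟨hB, htB⟩
      exact ⟨i, Finset.mem_insert_of_mem hi, hiB⟩

end IsTree

end SimpleGraph

def nodesMeeting {V T : Type*} (χ : T → Finset V) (X : Set V) : Set T :=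
  {t | ∃ w ∈ X, w ∈ χ t}

namespace IsTreeDecomp

variable {V T : Type*} {G : SimpleGraph V} {τ : SimpleGraph T} {χ : T → Finset V}

theorem connected_induce_nodesMeeting (hdec : IsTreeDecomp G τ χ) {X : Set V}
    (hX : (G.induce X).Connected) : (τ.induce (nodesMeeting χ X)).Connected := by
  have hU : nodesMeeting χ X = ⋃ w ∈ X, {t | w ∈ χ t} := by
    ext t
    simp [nodesMeeting]
  rw [hU]
  refine connected_induce_biUnion hX (fun w _ => hdec.2.2.2 w) fun x _ y _ hxy => ?_
  obtain ⟨t, hxt, hyt⟩ := hdec.2.2.1 x y hxy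
  exact ⟨t, hxt, hyt⟩

theorem anticomplete_of_disjoint_nodesMeeting (hdec : IsTreeDecomp G τ χ) {X Y : Set V}
    (h : Disjoint (nodesMeeting χ X) (nodesMeeting χ Y)) : Anticomplete G X Y := by
  refine ⟨Set.disjoint_left.2 fun x hxX hxY => ?_, fun x hx y hy hxy => ?_⟩
  · obtain ⟨t, ht⟩ := hdec.2.1 x
    exact Set.disjoint_left.1 h ⟨x, hxX, ht⟩ ⟨x, hxY, ht⟩
  · obtain ⟨t, hxt, hyt⟩ := hdec.2.2.1 x y hxy
    exact Set.disjoint_left.1 h ⟨x, hx, hxt⟩ ⟨y, hy, hyt⟩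

end IsTreeDecomp

theorem interiorW_cons_eq_support_dropLast {V : Type*} {G : SimpleGraph V} {a c b : V}
    (h : G.Adj a c) (p : G.Walk c b) (hP : (Walk.cons h p).IsPath) (hp : ¬ p.Nil) :
    interiorW (Walk.cons h p) = {x | x ∈ p.dropLast.support} := by
  have hnodup := hP.support_nodup
  rw [Walk.support_cons, ← Walk.support_dropLast_concat hp] at hnodup
  ext x
  obtain ⟨ha, hnodup⟩ := List.nodup_cons.1 hnodup
  have hb : b ∉ p.dropLast.support := fun hb =>
    List.disjoint_of_nodup_append hnodup hb (List.mem_singleton_self b)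
  simp only [interiorW, Set.mem_ofPred_eq, Walk.support_cons, List.mem_cons,
    ← Walk.support_dropLast_concat hp, List.mem_append]
  grind

theorem connected_induce_interiorW {V : Type*} {G : SimpleGraph V} {a b : V} {P : G.Walk a b}
    (hP : P.IsPath) (hab : a ≠ b) (hnadj : ¬ G.Adj a b) :
    (G.induce (interiorW P)).Connected := by
  cases P with
  | nil => exact absurd rfl hab
  | cons h p =>
    have hp : ¬ p.Nil := fun hp => hnadj (hp.eq ▸ h)
    rw [interiorW_cons_eq_support_dropLast h p hP hp]
    exact p.dropLast.connected_induce_support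

theorem stmt12_general {V T : Type} [Fintype T] (G : SimpleGraph V) (q : ℕ)
    (a b : V) (hslim : SlimPair G q a b)
    (τ : SimpleGraph T) (χ : T → Finset V) (hdec : IsTreeDecomp G τ χ) :
    ∃ I : Finset T, I.card < q ∧
      ∀ (P : G.Walk a b), IsInducedPathW G P →
        ∃ w ∈ interiorW P, ∃ i ∈ I, w ∈ χ i := by
  obtain ⟨hab, hnadj, hnwide⟩ := hslim
  let F : Set (Set T) :=
    {S | ∃ P : G.Walk a b, IsInducedPathW G P ∧ S = nodesMeeting χ (interiorW P)}
  have hF : ∀ S ∈ F, (τ.induce S).Connected := by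
    rintro _ ⟨P, hP, rfl⟩
    exact hdec.connected_induce_nodesMeeting (connected_induce_interiorW hP.1 hab hnadj)
  have hpack : ¬ ∃ f : Fin q → Set T, (∀ i, f i ∈ F) ∧ Pairwise (Disjoint on f) := by
    rintro ⟨f, hfF, hf⟩
    choose P hP hPf using hfF
    refine hnwide ⟨P, hP, fun i j hij x hx y hy => ?_⟩
    have hdisj : Disjoint (f i) (f j) := hf hij
    rw [hPf i, hPf j] at hdisj
    have hanti := hdec.anticomplete_of_disjoint_nodesMeeting hdisj
    exact ⟨fun hxy => Set.disjoint_left.1 hanti.1 hx (hxy ▸ hy), hanti.2 x hx y hy⟩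
  obtain ⟨I, hIq, hI⟩ := hdec.1.exists_finset_card_lt_forall_inter_nonempty q hF hpack
  refine ⟨I, hIq, fun P hP => ?_⟩
  obtain ⟨i, hi, w, hw, hwi⟩ := hI _ ⟨P, hP, rfl⟩
  exact ⟨w, hw, i, hi, hwi⟩

theorem stmt12 {V T : Type} [Fintype V] [Fintype T] (G : SimpleGraph V) (q : ℕ)
    (a b : V) (hslim : SlimPair G q a b)
    (τ : SimpleGraph T) (χ : T → Finset V) (hdec : IsTreeDecomp G τ χ) :
    ∃ I : Finset T, I.card < q ∧
      ∀ (P : G.Walk a b), IsInducedPathW G P →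
        ∃ w ∈ interiorW P, ∃ i ∈ I, w ∈ χ i :=
  stmt12_general G q a b hslim τ χ hdec
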